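/- Converse for linearly many switches (special case): Let X = X̂ = {0,1}, Λ the Hamming loss, and let the channel be a BSC with crossover probability 0 < δ < 1/2. Suppose m ≥ αn for some α > 0 and all large n. Construct the random process X by concatenating i.i.d. blocks of length L = ⌈1/α⌉, each block consisting of one symbol drawn uniformly from {0,1} repeated L times. Then (a) D_{0,m}(Xⁿ,Zⁿ) = 0 almost surely for all n large enough that m ≥ αn, i.e., a genie switching among symbol-by-symbol denoisers at most m times achieves zero loss; and (b) for any sequence of n-block denoisers X̂ⁿ, limsup_n E[L_{X̂ⁿ}(Xⁿ,Zⁿ)] > 0. Consequently limsup_n E[L_{X̂ⁿ}(Xⁿ,Zⁿ) − D_{0,m}(Xⁿ,Zⁿ)] > 0, and there exists an individual sequence x ∈ {0,1}^∞ for which this limsup of the conditional expectation given Xⁿ = xⁿ is positive. -/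

import Mathlib

open MeasureTheory ProbabilityTheory Filter

/-- Number of switches in an `n`-tuple of single-symbol denoisers `S : Fin n → Bool → Bool`. -/
def switchCount {n : ℕ} (S : Fin n → Bool → Bool) : ℕ :=
  (Finset.univ.filter fun t : Fin n =>
    0 < t.val ∧ S t ≠ S ⟨t.val - 1, Nat.lt_of_le_of_lt (Nat.sub_le _ _) t.isLt⟩).card

/-- Normalized Hamming loss between a clean sequence and a reconstruction. -/
noncomputable def hamLoss (n : ℕ) (x xhat : Fin n → Bool) : ℝ :=
  (1 / (n : ℝ)) * ∑ t, if xhat t ≠ x t then (1 : ℝ) else 0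

/-- `D_{0,m}(xⁿ,zⁿ)`: minimal normalized Hamming loss achievable by tuples of
single-symbol denoisers with at most `m` switches. -/
noncomputable def D0m (n m : ℕ) (x z : Fin n → Bool) : ℝ :=
  sInf ((fun S : Fin n → Bool → Bool => hamLoss n x fun t => S t (z t)) ''
    {S | switchCount S ≤ m})

open Finset
open scoped ENNReal Topology

/-! A source that is constant on blocks of length `L ≥ 1/α` changes value at most
`n / L ≤ αn` times in `n` steps, so the genie that switches between the constant denoisers at
the block boundaries is perfect. A denoiser, in contrast, errs on each symbol of a block `k` with
probability at least `δ ^ (2L)`: for either bit `b`, the event that the source symbol and all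
noise bits of the block equal `b` has probability at least `δ ^ (2L)`; on both events the block
is observed as all zeros, so the output is one and the same function of variables independent of
the block, and it is wrong on one of the two events. Since the source is independent of the noise,
the expected loss is the average over source realisations of the loss given the source, and a
reverse Fatou argument yields one realisation on which that loss is large infinitely often. -/

lemma hamLoss_nonneg (n : ℕ) (x y : Fin n → Bool) : 0 ≤ hamLoss n x y := by
  unfold hamLoss
  positivity

lemma hamLoss_le_one (n : ℕ) (x y : Fin n → Bool) : hamLoss n x y ≤ 1 := by
  unfold hamLoss
  rcases n.eq_zero_or_pos with rfl | hn
  · simp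
  rw [one_div, inv_mul_le_one₀ (by positivity)]
  calc ∑ t, (if y t ≠ x t then (1 : ℝ) else 0) ≤ ∑ _t : Fin n, (1 : ℝ) :=
        sum_le_sum fun t _ => by split_ifs <;> norm_num
    _ = n := by simp

lemma Nat.dvd_of_div_ne_sub_one_div {L t : ℕ} (ht : 0 < t) (h : t / L ≠ (t - 1) / L) : L ∣ t := by
  by_contra hL
  obtain ⟨s, rfl⟩ := Nat.exists_eq_add_of_lt ht
  exact h (by simpa using Nat.succ_div_of_not_dvd hL)

lemma switchCount_const_blocks_le (n L : ℕ) (b : ℕ → Bool) :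
    switchCount (fun (t : Fin n) (_ : Bool) => b (t / L)) ≤ n / L := by
  rw [← Nat.card_multiples' n L]
  refine card_le_card_of_injOn Fin.val (fun t ht => ?_) Fin.val_injective.injOn
  simp only [coe_filter, mem_univ, true_and, Set.mem_ofPred_eq, ne_eq, funext_iff,
    forall_const] at ht
  simp only [coe_filter, mem_range, Set.mem_ofPred_eq]
  exact ⟨by omega, by omega, Nat.dvd_of_div_ne_sub_one_div ht.1 fun h => ht.2 (congrArg b h)⟩

lemma D0m_eq_zero_of_switchCount_le {n m : ℕ} {x z : Fin n → Bool} (S : Fin n → Bool → Bool)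
    (hS : switchCount S ≤ m) (hSx : ∀ t, S t (z t) = x t) : D0m n m x z = 0 := by
  have hnonneg : ∀ y ∈ (fun S : Fin n → Bool → Bool => hamLoss n x fun t => S t (z t)) ''
      {S | switchCount S ≤ m}, 0 ≤ y := by
    rintro y ⟨S, -, rfl⟩
    exact hamLoss_nonneg _ _ _
  have hzero : (0 : ℝ) ∈ (fun S : Fin n → Bool → Bool => hamLoss n x fun t => S t (z t)) ''
      {S | switchCount S ≤ m} := ⟨S, hS, by simp [hamLoss, hSx]⟩
  exact le_antisymm (csInf_le ⟨0, hnonneg⟩ hzero) (le_csInf ⟨0, hzero⟩ hnonneg)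

lemma D0m_const_blocks_eq_zero {n m L : ℕ} (hm : n / L ≤ m) (b : ℕ → Bool) (z : Fin n → Bool) :
    D0m n m (fun t => b (t / L)) z = 0 :=
  D0m_eq_zero_of_switchCount_le _ ((switchCount_const_blocks_le n L b).trans hm) fun _ => rfl

lemma natCast_div_ceil_inv_le {α : ℝ} (hα : 0 < α) (n : ℕ) :
    ((n / ⌈1 / α⌉₊ : ℕ) : ℝ) ≤ α * n := by
  calc ((n / ⌈1 / α⌉₊ : ℕ) : ℝ) ≤ n / (⌈1 / α⌉₊ : ℝ) := Nat.cast_div_le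
    _ ≤ n / (1 / α) := div_le_div_of_nonneg_left n.cast_nonneg (by positivity) (Nat.le_ceil _)
    _ = α * n := by field_simp

lemma integral_hamLoss {Ω : Type*} [MeasurableSpace Ω] (μ : Measure Ω) [IsFiniteMeasure μ]
    {n : ℕ} {x y : Ω → Fin n → Bool} (hx : Measurable x) (hy : Measurable y) :
    ∫ ω, hamLoss n (x ω) (y ω) ∂μ = (1 / (n : ℝ)) * ∑ t, μ.real {ω | y ω t ≠ x ω t} := by
  have hE : ∀ t, MeasurableSet {ω | y ω t ≠ x ω t} := fun t =>
    (measurableSet_eq_fun hy.eval hx.eval).compl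
  have hind : ∀ t ω, (if y ω t ≠ x ω t then (1 : ℝ) else 0) =
      {ω | y ω t ≠ x ω t}.indicator 1 ω := fun _ _ => by simp [Set.indicator_apply]
  simp only [hamLoss, hind]
  rw [integral_const_mul, integral_finsetSum]
  · simp only [integral_indicator_one (hE _)]
  · exact fun t _ => (integrable_const 1).indicator (hE t)

lemma integral_hamLoss_le_one {Ω : Type*} [MeasurableSpace Ω] (μ : Measure Ω)
    [IsProbabilityMeasure μ] {n : ℕ} (x y : Ω → Fin n → Bool) :
    ∫ ω, hamLoss n (x ω) (y ω) ∂μ ≤ 1 := by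
  calc ∫ ω, hamLoss n (x ω) (y ω) ∂μ ≤ ‖∫ ω, hamLoss n (x ω) (y ω) ∂μ‖ := Real.le_norm_self _
    _ ≤ 1 * μ.real Set.univ := norm_integral_le_of_norm_le_const (ae_of_all _ fun ω => by
        rw [Real.norm_of_nonneg (hamLoss_nonneg _ _ _)]
        exact hamLoss_le_one _ _ _)
    _ = 1 := by simp

section Independence

variable {Ω ι β γ γ' : Type*} [MeasurableSpace Ω] {μ : Measure Ω} [MeasurableSpace β]
  [Finite β] [MeasurableSingletonClass β] [MeasurableSpace γ] [MeasurableSpace γ']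

lemma DependsOn.measurable_comp {f : ι → Ω → β} (hf : ∀ i, Measurable (f i)) [Nonempty γ]
    {F : (ι → β) → γ} {S : Finset ι} (hF : DependsOn F S) :
    Measurable fun ω => F (f · ω) := by
  obtain ⟨F', rfl⟩ := dependsOn_iff_exists_comp.1 hF
  exact (measurable_of_finite F').comp (measurable_pi_lambda _ fun i => hf i)

lemma ProbabilityTheory.iIndepFun.indepFun_of_dependsOn {f : ι → Ω → β} (hind : iIndepFun f μ)
    (hf : ∀ i, Measurable (f i)) [Nonempty γ] [Nonempty γ'] {S T : Finset ι} (hST : Disjoint S T)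
    {F : (ι → β) → γ} {G : (ι → β) → γ'} (hF : DependsOn F S) (hG : DependsOn G T) :
    IndepFun (fun ω => F (f · ω)) (fun ω => G (f · ω)) μ := by
  obtain ⟨F', rfl⟩ := dependsOn_iff_exists_comp.1 hF
  obtain ⟨G', rfl⟩ := dependsOn_iff_exists_comp.1 hG
  exact (hind.indepFun_finset S T hST hf).comp (measurable_of_finite F') (measurable_of_finite G')

end Independence

lemma ProbabilityTheory.iIndepFun.pow_card_le_measure_ne {Ω ι : Type*} [MeasurableSpace Ω]
    {μ : Measure Ω} [IsProbabilityMeasure μ] {f : ι → Ω → Bool} (hind : iIndepFun f μ)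
    (hf : ∀ i, Measurable (f i)) {p : ℝ≥0∞} (hp : ∀ i b, p ≤ μ (f i ⁻¹' {b}))
    {S T : Finset ι} (hST : Disjoint S T) {g : (ι → Bool) → Bool} (hg : DependsOn g T)
    {est Y : Ω → Bool} (hSg : ∀ b ω, (∀ i ∈ S, f i ω = b) → est ω = g (f · ω) ∧ Y ω = b) :
    p ^ S.card ≤ μ {ω | est ω ≠ Y ω} := by
  set A : Bool → Set Ω := fun b => ⋂ i ∈ S, f i ⁻¹' {b}
  set G : Bool → Set Ω := fun c => (fun ω => g (f · ω)) ⁻¹' {c}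
  have hAmeas : ∀ b, MeasurableSet (A b) := fun b =>
    Finset.measurableSet_biInter S fun i _ => hf i (measurableSet_singleton b)
  have hGmeas : ∀ c, MeasurableSet (G c) := fun c =>
    hg.measurable_comp hf (measurableSet_singleton c)
  have hA : ∀ b, p ^ S.card ≤ μ (A b) := fun b => by
    rw [hind.measure_inter_preimage_eq_mul S fun _ _ => measurableSet_singleton b]
    exact Finset.pow_card_le_prod _ _ _ fun i _ => hp i b
  have hAG : ∀ b c, μ (A b ∩ G c) = μ (A b) * μ (G c) := fun b c => by
    have hAb : A b = (fun ω => S.restrict (f · ω)) ⁻¹' {w | ∀ i, w i = b} := by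
      ext ω; simp [A]
    rw [hAb]
    exact (hind.indepFun_of_dependsOn hf hST (Finset.dependsOn_restrict S) hg
      ).measure_inter_preimage_eq_mul _ _ (Set.toFinite _).measurableSet
      (measurableSet_singleton c)
  have hG : μ (G true) + μ (G false) = 1 := by
    have hGc : G false = (G true)ᶜ := by ext ω; simp [G]
    rw [hGc]
    exact prob_add_prob_compl (hGmeas true)
  have herr : A false ∩ G true ∪ A true ∩ G false ⊆ {ω | est ω ≠ Y ω} := by
    rintro ω (⟨hω, hgω⟩ | ⟨hω, hgω⟩) <;>
    · obtain ⟨hest, hY⟩ := hSg _ ω (by simpa [A] using hω)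
      simp_all [G]
  have hdisj : Disjoint (A false ∩ G true) (A true ∩ G false) :=
    Set.disjoint_left.2 fun ω h h' => by simp_all [G]
  calc p ^ S.card = p ^ S.card * μ (G true) + p ^ S.card * μ (G false) := by
        rw [← mul_add, hG, mul_one]
    _ ≤ μ (A false) * μ (G true) + μ (A true) * μ (G false) := by gcongr <;> apply hA
    _ = μ (A false ∩ G true ∪ A true ∩ G false) := by
        rw [measure_union hdisj (hAmeas true |>.inter (hGmeas false)), hAG, hAG]
    _ ≤ μ {ω | est ω ≠ Y ω} := measure_mono herr

lemma ProbabilityTheory.IndepFun.integral_comp_eq_integral_integral {Ω α β : Type*}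
    [MeasurableSpace Ω] {μ : Measure Ω} [IsFiniteMeasure μ] [MeasurableSpace α] [Finite α]
    [MeasurableSingletonClass α] [MeasurableSpace β] [Finite β] [MeasurableSingletonClass β]
    {X : Ω → α} {Y : Ω → β} (hXY : IndepFun X Y μ) (hX : Measurable X) (hY : Measurable Y)
    (φ : α → β → ℝ) :
    ∫ ω, φ (X ω) (Y ω) ∂μ = ∫ ω', ∫ ω, φ (X ω') (Y ω) ∂μ ∂μ := by
  calc ∫ ω, φ (X ω) (Y ω) ∂μ = ∫ p, φ p.1 p.2 ∂μ.map fun ω => (X ω, Y ω) :=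
        (integral_map (hX.prodMk hY).aemeasurable
          (measurable_of_finite fun p : α × β => φ p.1 p.2).aestronglyMeasurable).symm
    _ = ∫ p, φ p.1 p.2 ∂(μ.map X).prod (μ.map Y) := by
        rw [hXY.map_prod_eq_prod_map_map hX.aemeasurable hY.aemeasurable]
    _ = ∫ a, ∫ b, φ a b ∂μ.map Y ∂μ.map X := integral_prod _ Integrable.of_finite
    _ = ∫ ω', ∫ ω, φ (X ω') (Y ω) ∂μ ∂μ := by
        rw [integral_map hX.aemeasurable (measurable_of_finite _).aestronglyMeasurable]
        simp_rw [integral_map hY.aemeasurable (measurable_of_finite _).aestronglyMeasurable]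

lemma exists_pos_limsup_of_le_integral {Ω : Type*} [MeasurableSpace Ω] {μ : Measure Ω}
    [IsFiniteMeasure μ] {ψ : ℕ → Ω → ℝ} (hψ : ∀ n, AEStronglyMeasurable (ψ n) μ)
    (hψ0 : ∀ n ω, 0 ≤ ψ n ω) {C : ℝ} (hψC : ∀ n ω, ψ n ω ≤ C) {c : ℝ} (hc : 0 < c)
    (hint : ∀ᶠ n in atTop, c ≤ ∫ ω, ψ n ω ∂μ) :
    ∃ ω, 0 < limsup (fun n => ψ n ω) atTop := by
  by_contra! hlimsup
  have htendsto : ∀ ω, Tendsto (fun n => ψ n ω) atTop (𝓝 0) := fun ω =>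
    tendsto_order.2 ⟨fun a ha => Eventually.of_forall fun n => ha.trans_le (hψ0 n ω),
      fun b hb => eventually_lt_of_limsup_lt ((hlimsup ω).trans_lt hb)
        ⟨C, eventually_map.2 (Eventually.of_forall fun n => hψC n ω)⟩⟩
  have hlim := tendsto_integral_of_dominated_convergence (fun _ => C) hψ (integrable_const C)
    (fun n => ae_of_all _ fun ω => by rw [Real.norm_of_nonneg (hψ0 n ω)]; exact hψC n ω)
    (ae_of_all _ htendsto)
  rw [integral_zero] at hlim
  linarith [ge_of_tendsto hlim hint]

lemma le_measure_preimage_singleton_of_bool {Ω : Type*} [MeasurableSpace Ω] {μ : Measure Ω}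
    [IsProbabilityMeasure μ] {g : Ω → Bool} (hg : Measurable g) {p : ℝ≥0∞}
    (htrue : p ≤ μ {ω | g ω = true}) (hfalse : p ≤ 1 - μ {ω | g ω = true}) (b : Bool) :
    p ≤ μ (g ⁻¹' {b}) := by
  cases b
  · rwa [show g ⁻¹' {false} = (g ⁻¹' {true})ᶜ by ext; simp,
      prob_compl_eq_one_sub (hg (measurableSet_singleton true))]
  · exact htrue

lemma ofReal_le_measure_sumElim_preimage {Ω : Type*} [MeasurableSpace Ω] {μ : Measure Ω}
    [IsProbabilityMeasure μ] {U Nse : ℕ → Ω → Bool} (hmeasU : ∀ i, Measurable (U i))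
    (hmeasN : ∀ i, Measurable (Nse i)) {δ : ℝ} (hU : ∀ i, μ {ω | U i ω = true} = 1 / 2)
    (hN : ∀ i, μ {ω | Nse i ω = true} = ENNReal.ofReal δ) (hδ0 : 0 < δ) (hδ1 : δ < 1 / 2)
    (j : ℕ ⊕ ℕ) (b : Bool) : ENNReal.ofReal δ ≤ μ (Sum.elim U Nse j ⁻¹' {b}) := by
  rcases j with i | i
  · refine le_measure_preimage_singleton_of_bool (hmeasU i) ?_ ?_ b <;> rw [hU i] <;>
      exact ENNReal.ofReal_le_of_le_toReal (by norm_num; linarith)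
  · refine le_measure_preimage_singleton_of_bool (hmeasN i) (hN i).ge ?_ b
    rw [hN i, ← ENNReal.ofReal_one, ← ENNReal.ofReal_sub _ hδ0.le]
    exact ENNReal.ofReal_le_ofReal (by linarith)

lemma card_filter_div_eq_le {L : ℕ} (hL : 0 < L) (n k : ℕ) :
    #{i ∈ range n | i / L = k} ≤ L := by
  calc #{i ∈ range n | i / L = k} ≤ #(Ico (k * L) (k * L + L)) := by
        refine card_le_card fun i hi => ?_
        have := (Nat.div_eq_iff hL).1 (mem_filter.1 hi).2
        simp only [mem_Ico]
        omega
    _ = L := by simp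

/-- Indices into `Sum.elim U Nse` (`Sum.inl j` for the source symbol `U j`, `Sum.inr i` for the
noise bit `Nse i`) of the variables that the observations `xor (U (i / L)) (Nse i)`, `i ∈ P`,
depend on. -/
def obsVars (L : ℕ) (P : Finset ℕ) : Finset (ℕ ⊕ ℕ) :=
  P.biUnion fun i => {Sum.inl (i / L), Sum.inr i}

lemma inl_mem_obsVars {L : ℕ} {P : Finset ℕ} {i : ℕ} (hi : i ∈ P) :
    Sum.inl (i / L) ∈ obsVars L P :=
  mem_biUnion.2 ⟨i, hi, mem_insert_self _ _⟩

lemma inr_mem_obsVars {L : ℕ} {P : Finset ℕ} {i : ℕ} (hi : i ∈ P) : Sum.inr i ∈ obsVars L P :=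
  mem_biUnion.2 ⟨i, hi, mem_insert_of_mem (mem_singleton_self _)⟩

lemma pow_le_measure_estimate_ne_blockSymbol {Ω : Type*} [MeasurableSpace Ω] {μ : Measure Ω}
    [IsProbabilityMeasure μ] {U Nse : ℕ → Ω → Bool} (hind : iIndepFun (Sum.elim U Nse) μ)
    (hU : ∀ i, Measurable (U i)) (hN : ∀ i, Measurable (Nse i)) {p : ℝ≥0∞}
    (hp : ∀ j b, p ≤ μ (Sum.elim U Nse j ⁻¹' {b})) {L n : ℕ} (hL : 0 < L)
    (F : (Fin n → Bool) → Bool) (t : Fin n) :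
    p ^ (2 * L) ≤ μ {ω | F (fun i => xor (U (i / L) ω) (Nse i ω)) ≠ U (t / L) ω} := by
  set k := (t : ℕ) / L
  set S := obsVars L {i ∈ range n | i / L = k}
  set T := obsVars L {i ∈ range n | i / L ≠ k}
  have hST : Disjoint S T := by
    simp only [S, T, obsVars, disjoint_biUnion_left, disjoint_biUnion_right]
    intro i hi j hj
    simp only [mem_filter] at hi hj
    simp only [disjoint_insert_left, disjoint_insert_right, mem_insert, mem_singleton,
      disjoint_singleton, Sum.inl.injEq, reduceCtorEq]
    grind
  have hS : S.card ≤ 2 * L := by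
    calc S.card ≤ ∑ i ∈ {i ∈ range n | i / L = k}, 2 :=
          card_biUnion_le.trans (sum_le_sum fun _ _ => card_le_two)
      _ ≤ 2 * L := by
        rw [sum_const, smul_eq_mul, mul_comm]
        exact Nat.mul_le_mul_left 2 (card_filter_div_eq_le hL n k)
  -- the estimate computed from the observations with block `k` replaced by zeros
  let g : (ℕ ⊕ ℕ → Bool) → Bool := fun v =>
    F fun i => if (i : ℕ) / L = k then false else xor (v (.inl (i / L))) (v (.inr i))
  have hg : DependsOn g T := fun v v' hvv' => by
    refine congrArg F (funext fun i => ?_)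
    split_ifs with hik
    · rfl
    have hiT : (i : ℕ) ∈ {i ∈ range n | i / L ≠ k} := by simp [hik]
    rw [hvv' _ (inl_mem_obsVars hiT), hvv' _ (inr_mem_obsVars hiT)]
  have hSg : ∀ b ω, (∀ j ∈ S, Sum.elim U Nse j ω = b) →
      F (fun i => xor (U (i / L) ω) (Nse i ω)) = g (Sum.elim U Nse · ω) ∧ U k ω = b := by
    intro b ω hb
    have hU : ∀ i ∈ {i ∈ range n | i / L = k}, U (i / L) ω = b ∧ Nse i ω = b := fun i hi =>
      ⟨hb _ (inl_mem_obsVars hi), hb _ (inr_mem_obsVars hi)⟩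
    refine ⟨congrArg F (funext fun i => ?_), ?_⟩
    · split_ifs with hik
      · obtain ⟨h1, h2⟩ := hU i (by simp [hik])
        simp [h1, h2]
      · rfl
    · exact (hU t (by simp [k])).1
  calc p ^ (2 * L) ≤ p ^ S.card :=
        pow_le_pow_of_le_one zero_le ((hp (.inl k) true).trans prob_le_one) hS
    _ ≤ _ := hind.pow_card_le_measure_ne (Sum.forall.2 ⟨hU, hN⟩) hp hST hg hSg

lemma pow_le_integral_hamLoss_blocks {Ω : Type*} [MeasurableSpace Ω] {μ : Measure Ω}
    [IsProbabilityMeasure μ] {U Nse : ℕ → Ω → Bool} (hind : iIndepFun (Sum.elim U Nse) μ)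
    (hU : ∀ i, Measurable (U i)) (hN : ∀ i, Measurable (Nse i)) {q : ℝ} (hq0 : 0 ≤ q)
    (hq : ∀ j b, ENNReal.ofReal q ≤ μ (Sum.elim U Nse j ⁻¹' {b})) {L n : ℕ}
    (hL : 0 < L) (hn : 0 < n) (F : Fin n → (Fin n → Bool) → Bool) :
    q ^ (2 * L) ≤ ∫ ω, hamLoss n (fun t => U (t / L) ω)
      (fun t => F t fun i => xor (U (i / L) ω) (Nse i ω)) ∂μ := by
  have hZ : Measurable fun ω (i : Fin n) => xor (U (i / L) ω) (Nse i ω) := by fun_prop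
  have herr : ∀ t : Fin n, q ^ (2 * L) ≤
      μ.real {ω | F t (fun i => xor (U (i / L) ω) (Nse i ω)) ≠ U (t / L) ω} := fun t => by
    rw [measureReal_def, ← ENNReal.ofReal_le_iff_le_toReal (measure_ne_top _ _),
      ENNReal.ofReal_pow hq0]
    exact pow_le_measure_estimate_ne_blockSymbol hind hU hN hq hL (F t) t
  calc q ^ (2 * L) = 1 / (n : ℝ) * ∑ _t : Fin n, q ^ (2 * L) := by
        rw [sum_const, card_univ, Fintype.card_fin, nsmul_eq_mul]
        field_simp
    _ ≤ 1 / (n : ℝ) * ∑ t : Fin n,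
          μ.real {ω | F t (fun i => xor (U (i / L) ω) (Nse i ω)) ≠ U (t / L) ω} := by
        gcongr with t
        exact herr t
    _ = _ := (integral_hamLoss μ (by fun_prop)
        (measurable_pi_lambda _ fun t => (measurable_of_finite (F t)).comp hZ)).symm

lemma indepFun_blocks_noise {Ω : Type*} [MeasurableSpace Ω] {μ : Measure Ω}
    {U Nse : ℕ → Ω → Bool} (hind : iIndepFun (Sum.elim U Nse) μ)
    (hU : ∀ i, Measurable (U i)) (hN : ∀ i, Measurable (Nse i)) (n L : ℕ) :
    IndepFun (fun ω (i : Fin n) => U (i / L) ω) (fun ω (i : Fin n) => Nse i ω) μ :=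
  hind.indepFun_of_dependsOn (Sum.forall.2 ⟨hU, hN⟩)
    (S := univ.image fun i : Fin n => Sum.inl (i / L)) (T := univ.image fun i : Fin n => .inr i)
    (by simp [disjoint_left]) (F := fun v (i : Fin n) => v (.inl (i / L)))
    (G := fun v (i : Fin n) => v (.inr i))
    (fun v v' h => funext fun i => h _ (by simp)) (fun v v' h => funext fun i => h _ (by simp))

lemma exists_pos_limsup_integral_hamLoss_blocks {Ω : Type*} [MeasurableSpace Ω]
    {μ : Measure Ω} [IsProbabilityMeasure μ] {U Nse : ℕ → Ω → Bool}
    (hind : iIndepFun (Sum.elim U Nse) μ) (hU : ∀ i, Measurable (U i))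
    (hN : ∀ i, Measurable (Nse i)) (L : ℕ) (F : (n : ℕ) → Fin n → (Fin n → Bool) → Bool)
    {c : ℝ} (hc : 0 < c) (hloss : ∀ᶠ n in atTop, c ≤ ∫ ω, hamLoss n (fun t => U (t / L) ω)
      (fun t => F n t fun i => xor (U (i / L) ω) (Nse i ω)) ∂μ) :
    ∃ ω₀, 0 < limsup (fun n => ∫ ω, hamLoss n (fun t => U (t / L) ω₀)
      (fun t => F n t fun i => xor (U (i / L) ω₀) (Nse i ω)) ∂μ) atTop := by
  let φ : (n : ℕ) → (Fin n → Bool) → (Fin n → Bool) → ℝ := fun n x v =>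
    hamLoss n x fun t => F n t fun i => xor (x i) (v i)
  refine exists_pos_limsup_of_le_integral (μ := μ) (C := 1) (fun n =>
      ((measurable_of_finite fun x : Fin n → Bool => ∫ ω, φ n x (Nse · ω) ∂μ).comp
        (by fun_prop : Measurable fun ω (i : Fin n) => U (i / L) ω)).aestronglyMeasurable)
    (fun n ω => integral_nonneg fun _ => hamLoss_nonneg _ _ _) (fun n ω => ?_) hc
    (hloss.mono fun n hn => ?_)
  · exact integral_hamLoss_le_one μ _ _
  · rwa [← (indepFun_blocks_noise hind hU hN n L).integral_comp_eq_integral_integral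
      (by fun_prop) (by fun_prop) (φ n)]

/-- Converse for linearly many switches (binary/Hamming/BSC case).
With `m ≥ αn` eventually, and `X` built from i.i.d. uniform blocks of length
`L = ⌈1/α⌉` observed through a BSC(δ), `0 < δ < 1/2`: (a) the `m`-switching genie
achieves zero loss, `D_{0,m}(Xⁿ,Zⁿ) = 0` a.s. for all large `n`; (b) any sequence of
`n`-block denoisers has `limsup E[loss] > 0`; hence (c) `limsup E[loss − D_{0,m}] > 0`,
and (d) there is an individual sequence `x` on which the expected excess loss (over the
channel noise only) has positive limsup. -/
theorem converse_linear_switches {Ω : Type*} [MeasurableSpace Ω]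
    (μ : Measure Ω) [IsProbabilityMeasure μ]
    (δ α : ℝ) (hδ0 : 0 < δ) (hδ1 : δ < 1 / 2) (hα : 0 < α)
    (m : ℕ → ℕ) (hm : ∀ᶠ n : ℕ in atTop, α * (n : ℝ) ≤ (m n : ℝ))
    (L : ℕ) (hL : L = ⌈1 / α⌉₊)
    (U Nse : ℕ → Ω → Bool)
    (hmeasU : ∀ i, Measurable (U i)) (hmeasN : ∀ i, Measurable (Nse i))
    (hindep : iIndepFun (Sum.elim U Nse) μ)
    (hU : ∀ i, μ {ω | U i ω = true} = 1 / 2)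
    (hN : ∀ i, μ {ω | Nse i ω = true} = ENNReal.ofReal δ)
    (Xp Zp : ℕ → Ω → Bool)
    (hX : ∀ t ω, Xp t ω = U (t / L) ω)
    (hZ : ∀ t ω, Zp t ω = xor (Xp t ω) (Nse t ω))
    (Xhat : (n : ℕ) → Fin n → (Fin n → Bool) → Bool) :
    (∀ᶠ n in atTop, ∀ᵐ ω ∂μ,
        D0m n (m n) (fun t => Xp t ω) (fun t => Zp t ω) = 0) ∧
      (0 < atTop.limsup fun n =>
        ∫ ω, hamLoss n (fun t => Xp t ω) (fun t => Xhat n t fun i => Zp i ω) ∂μ) ∧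
      (0 < atTop.limsup fun n =>
        ∫ ω, (hamLoss n (fun t => Xp t ω) (fun t => Xhat n t fun i => Zp i ω) -
          D0m n (m n) (fun t => Xp t ω) (fun t => Zp t ω)) ∂μ) ∧
      ∃ x : ℕ → Bool,
        0 < atTop.limsup fun n =>
          ∫ ω, (hamLoss n (fun t => x t)
              (fun t => Xhat n t fun i => xor (x (i : ℕ)) (Nse (i : ℕ) ω)) -
            D0m n (m n) (fun t => x (t : ℕ))
              (fun t => xor (x (t : ℕ)) (Nse (t : ℕ) ω))) ∂μ := by
  obtain rfl : Xp = fun t ω => U (t / L) ω := funext₂ hX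
  obtain rfl : Zp = fun t ω => xor (U (t / L) ω) (Nse t ω) := funext₂ hZ
  have hD : ∀ᶠ n in atTop, ∀ (b : ℕ → Bool) (z : Fin n → Bool),
      D0m n (m n) (fun t => b (t / L)) z = 0 :=
    hm.mono fun n hn => D0m_const_blocks_eq_zero (by
      exact_mod_cast (hL ▸ natCast_div_ceil_inv_le hα n).trans hn)
  have hL0 : 0 < L := hL ▸ Nat.ceil_pos.2 (by positivity)
  have hloss : ∀ᶠ n in atTop, δ ^ (2 * L) ≤ ∫ ω, hamLoss n (fun t => U (t / L) ω)
      (fun t => Xhat n t fun i => xor (U (i / L) ω) (Nse i ω)) ∂μ :=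
    (eventually_gt_atTop 0).mono fun n hn => pow_le_integral_hamLoss_blocks hindep hmeasU hmeasN
      hδ0.le (ofReal_le_measure_sumElim_preimage hmeasU hmeasN hU hN hδ0 hδ1) hL0 hn (Xhat n)
  have hpos : 0 < δ ^ (2 * L) := by positivity
  have hb := hpos.trans_le (le_limsup_of_frequently_le hloss.frequently
    ⟨1, eventually_map.2 (Eventually.of_forall fun n => integral_hamLoss_le_one μ _ _)⟩)
  refine ⟨hD.mono fun n hn => ae_of_all _ fun ω => hn (U · ω) _, hb, ?_, ?_⟩
  · refine hb.trans_eq (limsup_congr (hD.mono fun n hn =>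
      integral_congr_ae (ae_of_all _ fun ω => ?_)))
    simp only [hn (U · ω), sub_zero]
  · obtain ⟨ω₀, hω₀⟩ := exists_pos_limsup_integral_hamLoss_blocks hindep hmeasU hmeasN L Xhat
      hpos hloss
    refine ⟨fun i => U (i / L) ω₀, ?_⟩
    rwa [limsup_congr (hD.mono fun n hn => ?_)]
    simp only [hn (U · ω₀), sub_zero]
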